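/- arXiv:2305.15235 — 2 statements merged into one kernel-verified Lean document; each statement's English description precedes it below -/
import Mathlib

section
/- Let U be a finite nonempty set, f : U → Bool, S ⊆ U, and g : U × Bool → Bool such that (i) g(u,r) = r for every u ∉ S and every r ∈ Bool, (ii) g(u, true) = g(u, false) for every u ∈ S, and (iii) |{u ∈ S : g(u, false) = f(u)}| ≥ (3/5)·|S|. Then there exists a bit r* ∈ Bool such that |{u ∈ U : g(u, r*) = f(u)}| / |U| ≥ 1/2 + |S| / (10·|U|). -/
open Finset
open scoped Classical

/-- Fixing the random bit of the approximating circuit: a circuit that outputs a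
random bit outside `S` and a fixed bit correct on a 3/5-fraction of `S` yields,
for some fixed bit `r*`, agreement `1/2 + |S|/(10|U|)` with `f`. -/
theorem fix_random_bit {U : Type*} [Fintype U] [Nonempty U]
    (f : U → Bool) (S : Finset U) (g : U × Bool → Bool)
    (h1 : ∀ u : U, u ∉ S → ∀ r : Bool, g (u, r) = r)
    (h2 : ∀ u : U, u ∈ S → g (u, true) = g (u, false))
    (h3 : (3 / 5 : ℝ) * (S.card : ℝ)
      ≤ ((S.filter (fun u => g (u, false) = f u)).card : ℝ)) :
    ∃ rstar : Bool,
      ((Finset.univ.filter (fun u : U => g (u, rstar) = f u)).card : ℝ)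
          / (Fintype.card U : ℝ)
        ≥ 1 / 2 + (S.card : ℝ) / (10 * (Fintype.card U : ℝ)) := by
  classical
  set T := S.filter (fun u => g (u, false) = f u) with hT
  -- key decomposition
  have key : ∀ r : Bool,
      (Finset.univ.filter (fun u : U => g (u, r) = f u)).card
        = T.card + ((Finset.univ \ S).filter (fun u => f u = r)).card := by
    intro r
    have hsplit : Finset.univ.filter (fun u : U => g (u, r) = f u)
        = S.filter (fun u => g (u, r) = f u)
          ∪ (Finset.univ \ S).filter (fun u => g (u, r) = f u) := by
      rw [← Finset.filter_union, Finset.union_sdiff_of_subset (Finset.subset_univ S)]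
    have hdisj : Disjoint (S.filter (fun u => g (u, r) = f u))
        ((Finset.univ \ S).filter (fun u => g (u, r) = f u)) := by
      apply Finset.disjoint_filter_filter
      exact Finset.disjoint_sdiff
    rw [hsplit, Finset.card_union_of_disjoint hdisj]
    congr 1
    · congr 1
      apply Finset.filter_congr
      intro u hu
      cases r with
      | false => rfl
      | true => rw [h2 u hu]
    · congr 1
      apply Finset.filter_congr
      intro u hu
      have hu' : u ∉ S := (Finset.mem_sdiff.mp hu).2
      rw [h1 u hu' r]
      constructor <;> (intro h; exact h.symm)
  -- partition of complement by f
  have hpart : ((Finset.univ \ S).filter (fun u => f u = true)).card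
      + ((Finset.univ \ S).filter (fun u => f u = false)).card
      = (Finset.univ \ S).card := by
    have := Finset.card_filter_add_card_filter_not
      (s := Finset.univ \ S) (p := fun u => f u = true)
    simpa [Bool.not_eq_true] using this
  have hcompl : (Finset.univ \ S).card = Fintype.card U - S.card := by
    rw [Finset.card_sdiff_of_subset (Finset.subset_univ S), Finset.card_univ]
  have hSle : S.card ≤ Fintype.card U := Finset.card_le_card (Finset.subset_univ S)
  -- choose the better bit
  obtain ⟨r, hr⟩ : ∃ r : Bool,
      (Fintype.card U : ℝ) - S.card
        ≤ 2 * ((Finset.univ \ S).filter (fun u => f u = r)).card := by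
    by_contra hcon
    push_neg at hcon
    have h1' := hcon true
    have h2' := hcon false
    have : ((Finset.univ \ S).card : ℝ) = (Fintype.card U : ℝ) - S.card := by
      rw [hcompl]
      push_cast [Nat.cast_sub hSle]
      ring
    have hsum : ((Finset.univ \ S).filter (fun u => f u = true)).card
        + (((Finset.univ \ S).filter (fun u => f u = false)).card : ℝ)
        = (Fintype.card U : ℝ) - S.card := by
      rw [← this]
      exact_mod_cast hpart
    linarith
  refine ⟨r, ?_⟩
  have hn : (0 : ℝ) < (Fintype.card U : ℝ) := by
    exact_mod_cast Fintype.card_pos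
  have hkey := key r
  have hkeyR : ((Finset.univ.filter (fun u : U => g (u, r) = f u)).card : ℝ)
      = (T.card : ℝ) + ((Finset.univ \ S).filter (fun u => f u = r)).card := by
    exact_mod_cast hkey
  have hmain : (Fintype.card U : ℝ) / 2 + (S.card : ℝ) / 10
      ≤ ((Finset.univ.filter (fun u : U => g (u, r) = f u)).card : ℝ) := by
    rw [hkeyR]
    have hT3 : (3 / 5 : ℝ) * S.card ≤ (T.card : ℝ) := h3
    linarith
  rw [ge_iff_le]
  have heq : (1 : ℝ) / 2 + (S.card : ℝ) / (10 * (Fintype.card U : ℝ))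
      = ((Fintype.card U : ℝ) / 2 + (S.card : ℝ) / 10) / (Fintype.card U : ℝ) := by
    field_simp
  rw [heq]
  gcongr
end

section
/- Let k ≥ 1 and δ ∈ [0, 1/2]. Let p : {0,1}^n → [0,1] be a function (the probability that g outputs 1 on each input) such that: E_x[p(x)] = 1/2, and for every x, p(x) ∈ {0, 1/2, 1}, with |{x : p(x) = 1/2}| = 2δ·2^n. For a Boolean function C : {0,1}^k → {0,1}, define ExpBias = E_{x₁,…,x_k}[ |E[χ(C(g(x₁),…,g(x_k)))| ], where g(x_i) are independent bits with Pr[g(x_i)=1] = p(x_i) and χ(b) = (−1)^b; and define NoiseStab_δ(C) = E[χ(C(y))·χ(C(y ⊕ η))], where y is uniform on {0,1}^k and η has i.i.d. Bernoulli(δ) coordinates. Then ExpBias² ≤ NoiseStab_δ(C). -/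
open Finset
open scoped Classical

/-- `chi b = (-1)^b`. -/
noncomputable def chi (b : Bool) : ℝ := if b then -1 else 1

/-- Expected bias is bounded by the square root of noise stability (stated in
squared form): for a balanced δ-random probabilistic function `g`, given by its
acceptance probabilities `p : {0,1}^n → {0,1/2,1}` with mean `1/2` and with the
half-values on a set of density `2δ`, the expected bias of `C ∘ g^{⊗k}` is at
most `√(NoiseStab_δ(C))`. -/
theorem expbias_sq_le_noise_stability (n k : ℕ) (hk : 1 ≤ k)
    (δ : ℝ) (hδ0 : 0 ≤ δ) (hδ1 : δ ≤ 1 / 2)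
    (p : (Fin n → Bool) → ℝ)
    (hmean : ∑ x : Fin n → Bool, p x = (2 : ℝ) ^ n * (1 / 2))
    (hvals : ∀ x, p x = 0 ∨ p x = 1 / 2 ∨ p x = 1)
    (hhalf : ((Finset.univ.filter
        (fun x : Fin n → Bool => p x = 1 / 2)).card : ℝ) = 2 * δ * 2 ^ n)
    (C : (Fin k → Bool) → Bool) :
    (((2 : ℝ) ^ n)⁻¹ ^ k * ∑ x : Fin k → (Fin n → Bool),
        |∑ b : Fin k → Bool,
          (∏ i, (if b i then p (x i) else 1 - p (x i))) * chi (C b)|) ^ 2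
      ≤ ((2 : ℝ) ^ k)⁻¹ * ∑ y : Fin k → Bool, ∑ η : Fin k → Bool,
          (∏ i, (if η i then δ else 1 - δ)) * (chi (C y) *
            chi (C (fun i => xor (y i) (η i)))) := by
  set W : Bool → (Fin n → Bool) → ℝ := fun b z => if b then p z else 1 - p z with hW
  set Bias : (Fin k → (Fin n → Bool)) → ℝ :=
    fun x => ∑ b : Fin k → Bool, (∏ i, W (b i) (x i)) * chi (C b) with hBias
  have hcardn : ((Finset.univ : Finset (Fin n → Bool)).card : ℝ) = (2 : ℝ) ^ n := by
    simp [Finset.card_univ]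
  -- sum of p(1-p)
  have hS2 : ∑ z : Fin n → Bool, p z * (1 - p z) = δ / 2 * 2 ^ n := by
    have h1 : ∀ z, p z * (1 - p z) = if p z = 1 / 2 then (1 : ℝ) / 4 else 0 := by
      intro z; rcases hvals z with h | h | h <;> rw [h] <;> norm_num
    rw [Finset.sum_congr rfl (fun z _ => h1 z), Finset.sum_ite, Finset.sum_const,
      Finset.sum_const_zero, add_zero, nsmul_eq_mul, hhalf]
    ring
  -- the key single-coordinate identity
  have key : ∀ b b' : Bool, ∑ z : Fin n → Bool, W b z * W b' z
      = 2 ^ n * (1 / 2 * (if xor b b' then δ else 1 - δ)) := by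
    have hsum1 : ∑ z : Fin n → Bool, (1 - p z) = (2 : ℝ) ^ n * (1 / 2) := by
      rw [Finset.sum_sub_distrib, Finset.sum_const, hmean] at *
      rw [nsmul_eq_mul] at *
      rw [show (((Finset.univ : Finset (Fin n → Bool)).card : ℝ)) = (2:ℝ)^n from hcardn]
      ring
    intro b b'
    have e1 : ∀ z, p z * p z = p z - p z * (1 - p z) := fun z => by ring
    have e2 : ∀ z, (1 - p z) * (1 - p z) = (1 - p z) - p z * (1 - p z) := fun z => by ring
    have e3 : ∀ z, (1 - p z) * p z = p z * (1 - p z) := fun z => by ring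
    cases b <;> cases b' <;> simp only [hW, Bool.xor_false, Bool.true_xor, Bool.false_xor,
      Bool.xor_true, Bool.not_false, Bool.not_true, if_true, if_false, Bool.false_eq_true,
      ite_true, ite_false]
    · rw [Finset.sum_congr rfl (fun z _ => e2 z), Finset.sum_sub_distrib, hsum1, hS2]; ring
    · rw [Finset.sum_congr rfl (fun z _ => e3 z), hS2]; ring
    · rw [hS2]; ring
    · rw [Finset.sum_congr rfl (fun z _ => e1 z), Finset.sum_sub_distrib, hmean, hS2]; ring
  have h2n : ((2:ℝ) ^ n) ≠ 0 := by positivity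
  -- Cauchy–Schwarz
  have hcardN : ((Finset.univ : Finset (Fin k → Fin n → Bool)).card : ℝ) = ((2:ℝ) ^ n) ^ k := by
    simp [Finset.card_univ]
  have hcs : (∑ x : Fin k → (Fin n → Bool), |Bias x|) ^ 2
      ≤ (∑ x : Fin k → (Fin n → Bool), Bias x ^ 2) * ((2:ℝ)^n)^k := by
    have h := Finset.sum_mul_sq_le_sq_mul_sq Finset.univ
      (fun x : Fin k → (Fin n → Bool) => |Bias x|) (fun _ => (1:ℝ))
    simpa [sq_abs, hcardN] using h
  have hsq : ∀ x : Fin k → (Fin n → Bool), Bias x ^ 2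
      = ∑ q : (Fin k → Bool) × (Fin k → Bool),
      (∏ i, W (q.1 i) (x i) * W (q.2 i) (x i)) * (chi (C q.1) * chi (C q.2)) := by
    intro x
    rw [hBias, pow_two, Finset.sum_mul_sum, Fintype.sum_prod_type]
    refine Finset.sum_congr rfl fun b _ => Finset.sum_congr rfl fun b' _ => ?_
    simp only [Finset.prod_mul_distrib]; ring
  have hmain : ((2:ℝ)^n)⁻¹ ^ k * ∑ x : Fin k → (Fin n → Bool), Bias x ^ 2
      = ((2:ℝ) ^ k)⁻¹ * ∑ q : (Fin k → Bool) × (Fin k → Bool),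
        (∏ i, (if xor (q.1 i) (q.2 i) then δ else 1 - δ)) * (chi (C q.1) * chi (C q.2)) := by
    rw [Finset.sum_congr rfl fun x _ => hsq x, Finset.sum_comm, Finset.mul_sum, Finset.mul_sum]
    apply Finset.sum_congr rfl; intro q _
    rw [← Finset.sum_mul, ← Fintype.prod_sum (fun i z => W (q.1 i) z * W (q.2 i) z),
      Finset.prod_congr rfl fun i _ => key (q.1 i) (q.2 i),
      Finset.prod_mul_distrib, Finset.prod_mul_distrib, Finset.prod_const, Finset.prod_const,
      Finset.card_univ, Fintype.card_fin]
    field_simp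
    simp only [one_div, inv_pow]; field_simp
  have hRHS : ∑ y : Fin k → Bool, ∑ η : Fin k → Bool,
        (∏ i, (if η i then δ else 1 - δ)) * (chi (C y) * chi (C (fun i => xor (y i) (η i))))
      = ∑ q : (Fin k → Bool) × (Fin k → Bool),
        (∏ i, (if xor (q.1 i) (q.2 i) then δ else 1 - δ)) * (chi (C q.1) * chi (C q.2)) := by
    rw [Fintype.sum_prod_type]
    refine Finset.sum_congr rfl fun y _ => ?_
    have hinv : Function.Involutive (fun b' : Fin k → Bool => fun i => xor (y i) (b' i)) := by
      intro b'; funext i; simp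
    refine (Fintype.sum_bijective _ hinv.bijective _ _ fun b' => ?_).symm
    have hC : (fun i => xor (y i) (xor (y i) (b' i))) = b' := by funext i; simp
    simp only [hC]
  have hLS : (∑ x : Fin k → (Fin n → Bool),
        |∑ b : Fin k → Bool,
          (∏ i, (if b i then p (x i) else 1 - p (x i))) * chi (C b)|)
      = ∑ x : Fin k → (Fin n → Bool), |Bias x| := rfl
  calc (((2:ℝ)^n)⁻¹ ^ k * ∑ x : Fin k → (Fin n → Bool), |Bias x|) ^ 2
      = (((2:ℝ)^n)⁻¹ ^ k) ^ 2 * (∑ x : Fin k → (Fin n → Bool), |Bias x|) ^ 2 := by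
        rw [mul_pow]
    _ ≤ (((2:ℝ)^n)⁻¹ ^ k) ^ 2 *
          ((∑ x : Fin k → (Fin n → Bool), Bias x ^ 2) * ((2:ℝ)^n)^k) :=
        mul_le_mul_of_nonneg_left hcs (by positivity)
    _ = ((2:ℝ)^n)⁻¹ ^ k * ∑ x : Fin k → (Fin n → Bool), Bias x ^ 2 := by
        field_simp; simp only [one_div, inv_pow]; field_simp
    _ = _ := hmain.trans (by rw [hRHS])
end
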